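/- arXiv:2511.15455 — 2 statements merged into one kernel-verified Lean document; each statement's English description precedes it below -/
import Mathlib

section
/- Let μ ∈ 𝒫(𝕋^d), q ≥ 1, and let {π_t}_{t∈[0,T]} be a family of admissible q-variations from μ. Suppose {π̂_t}_{t∈[0,T]} ⊆ 𝒫(𝕋^d×𝕋^d) satisfies pr₂♯π_t = pr₁♯π̂_t for all t ∈ [0,T] and lim_{t→0⁺} W^{π̂_t}_q(pr₁♯π̂_t, pr₂♯π̂_t)/t = 0. Then the family of compositions {π_t ∘ π̂_t}_{t∈[0,T]} is a family of admissible q-variations from μ. -/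
open MeasureTheory Filter Topology ProbabilityTheory

noncomputable section

abbrev Torus (d : ℕ) := Fin d → AddCircle (1 : ℝ)

def Wcost {X : Type*} [MeasurableSpace X] [PseudoMetricSpace X]
    (q : ℝ) (π : Measure (X × X)) : ℝ :=
  (∫ z, dist z.1 z.2 ^ q ∂π) ^ (1 / q)

def IsAdmissibleVariation {d : ℕ} (q T : ℝ) (μ : Measure (Torus d))
    (π : ℝ → Measure (Torus d × Torus d)) : Prop :=
  (∀ t ∈ Set.Icc (0:ℝ) T, IsProbabilityMeasure (π t)) ∧
  (∀ t ∈ Set.Icc (0:ℝ) T, (π t).map Prod.fst = μ) ∧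
  (∀ f : BoundedContinuousFunction (Torus d × Torus d) ℝ,
    Tendsto (fun t => ∫ p, f p ∂(π t)) (𝓝[>] (0:ℝ)) (𝓝 (∫ x, f (x, x) ∂μ))) ∧
  (∃ C > 0, Filter.limsup (fun t => Wcost q (π t) / t) (𝓝[>] (0:ℝ)) ≤ C)

/-- Composition of two plans sharing the middle marginal, obtained by gluing the
disintegrations with respect to the common marginal. -/
def planComp {d : ℕ} (π₁₂ π₂₃ : ProbabilityMeasure (Torus d × Torus d)) :
    Measure (Torus d × Torus d) :=
  ((((π₁₂ : Measure (Torus d × Torus d)).map Prod.swap).fst ⊗ₘ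
      ((((π₁₂ : Measure (Torus d × Torus d)).map Prod.swap).condKernel) ×ₖ
        ((π₂₃ : Measure (Torus d × Torus d)).condKernel)))).map Prod.snd


/-!
Glue `π_t` and `π̂_t` along their common marginal into a coupling of three points
`(x, y, z)` with `(x, y) ∼ π_t`, `(y, z) ∼ π̂_t`, `(x, z) ∼ π_t ∘ π̂_t`. Minkowski's inequality
on this coupling gives `|W(π_t ∘ π̂_t) - W(π_t)| ≤ W(π̂_t) = o(t)`, so the difference quotients
have the same limsup; and for a uniformly continuous test function `f`,
`|∫ f d(π_t ∘ π̂_t) - ∫ f dπ_t|` is controlled by `∫ d(y, z) ≤ W(π̂_t) → 0`, which transfers the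
narrow convergence.
-/

open scoped ENNReal

lemma MeasureTheory.Measure.map_compProd_prod_fst {α β γ : Type*} [MeasurableSpace α]
    [MeasurableSpace β] [MeasurableSpace γ] (μ : Measure α) [SFinite μ]
    (κ : Kernel α β) [IsSFiniteKernel κ] (η : Kernel α γ) [IsMarkovKernel η] :
    (μ ⊗ₘ (κ ×ₖ η)).map (Prod.map id Prod.fst) = μ ⊗ₘ κ := by
  rw [← Measure.compProd_map measurable_fst, ← Kernel.fst_eq, Kernel.fst_prod]

lemma MeasureTheory.Measure.map_compProd_prod_snd {α β γ : Type*} [MeasurableSpace α]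
    [MeasurableSpace β] [MeasurableSpace γ] (μ : Measure α) [SFinite μ]
    (κ : Kernel α β) [IsMarkovKernel κ] (η : Kernel α γ) [IsSFiniteKernel η] :
    (μ ⊗ₘ (κ ×ₖ η)).map (Prod.map id Prod.snd) = μ ⊗ₘ η := by
  rw [← Measure.compProd_map measurable_snd, ← Kernel.snd_eq, Kernel.snd_prod]

section Gluing

variable {X : Type*} [MeasurableSpace X] [StandardBorelSpace X] [Nonempty X]

/-- For `w = (y, x, z)`, with the middle point first, `(x, y) ∼ P` and `(y, z) ∼ Ph` under
`glue P Ph` when `P.map Prod.snd = Ph.map Prod.fst`. -/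
def glue (P Ph : Measure (X × X)) [IsFiniteMeasure P] [IsFiniteMeasure Ph] :
    Measure (X × X × X) :=
  (P.map Prod.swap).fst ⊗ₘ ((P.map Prod.swap).condKernel ×ₖ Ph.condKernel)

variable (P Ph : Measure (X × X)) [IsFiniteMeasure P] [IsFiniteMeasure Ph]

lemma map_glue_left : (glue P Ph).map (fun w => (w.2.1, w.1)) = P := by
  have : (fun w : X × X × X => (w.2.1, w.1)) = Prod.swap ∘ Prod.map id Prod.fst := rfl
  rw [this, ← Measure.map_map measurable_swap (measurable_id.prodMap measurable_fst), glue,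
    Measure.map_compProd_prod_fst, Measure.disintegrate,
    Measure.map_map measurable_swap measurable_swap, Prod.swap_swap_eq, Measure.map_id]

lemma map_glue_right (h : P.map Prod.snd = Ph.map Prod.fst) :
    (glue P Ph).map (fun w => (w.1, w.2.2)) = Ph := by
  have hfst : (P.map Prod.swap).fst = Ph.fst := by rw [Measure.fst_map_swap]; exact h
  change (glue P Ph).map (Prod.map id Prod.snd) = Ph
  rw [glue, Measure.map_compProd_prod_snd, hfst, Measure.disintegrate]

instance [IsProbabilityMeasure P] : IsProbabilityMeasure (glue P Ph) :=
  have : IsProbabilityMeasure ((glue P Ph).map fun w => (w.2.1, w.1)) := by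
    rwa [map_glue_left]
  Measure.isProbabilityMeasure_of_map fun w => (w.2.1, w.1)

end Gluing

open scoped BoundedContinuousFunction

section Wasserstein

variable {Ω X : Type*} [MeasurableSpace Ω] [PseudoMetricSpace X] [MeasurableSpace X]
  [OpensMeasurableSpace X] [SecondCountableTopology X]

lemma memLp_dist [BoundedSpace X] {u v : Ω → X} (hu : Measurable u) (hv : Measurable v)
    (p : ℝ≥0∞) (G : Measure Ω) [IsFiniteMeasure G] : MemLp (fun w => dist (u w) (v w)) p G :=
  MemLp.of_bound (hu.dist hv).aestronglyMeasurable (Metric.diam (Set.univ : Set X))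
    (ae_of_all _ fun w => by
      rw [Real.norm_of_nonneg dist_nonneg]
      exact Metric.dist_le_diam_of_mem BoundedSpace.bounded_univ trivial trivial)

lemma eLpNorm_dist_le_add {p : ℝ≥0∞} (hp : 1 ≤ p) (G : Measure Ω) {a b c : Ω → X}
    (ha : Measurable a) (hb : Measurable b) (hc : Measurable c) :
    eLpNorm (fun w => dist (a w) (c w)) p G
      ≤ eLpNorm (fun w => dist (a w) (b w)) p G + eLpNorm (fun w => dist (b w) (c w)) p G :=
  (eLpNorm_mono_real fun w => by
      rw [Real.norm_of_nonneg dist_nonneg]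
      exact dist_triangle _ _ _).trans
    (eLpNorm_add_le (ha.dist hb).aestronglyMeasurable (hb.dist hc).aestronglyMeasurable hp)

lemma Wcost_eq_toReal_eLpNorm [BoundedSpace X] {q : ℝ} (hq : 0 < q) (π : Measure (X × X))
    [IsFiniteMeasure π] :
    Wcost q π = (eLpNorm (fun z => dist z.1 z.2) (ENNReal.ofReal q) π).toReal := by
  rw [(memLp_dist measurable_fst measurable_snd _ π).eLpNorm_eq_integral_rpow_norm
      (by simpa using hq) ENNReal.ofReal_ne_top, ENNReal.toReal_ofReal hq.le,
    ENNReal.toReal_ofReal (by positivity), Wcost, one_div]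
  simp only [Real.norm_of_nonneg dist_nonneg]

lemma Wcost_map_swap (q : ℝ) (π : Measure (X × X)) : Wcost q (π.map Prod.swap) = Wcost q π := by
  rw [Wcost, Wcost, integral_map measurable_swap.aemeasurable
    (measurable_dist.pow_const q).aestronglyMeasurable]
  simp only [Prod.fst_swap, Prod.snd_swap, dist_comm]

lemma Wcost_map_eq_toReal_eLpNorm [BoundedSpace X] {q : ℝ} (hq : 0 < q) (G : Measure Ω)
    [IsFiniteMeasure G] {u v : Ω → X} (hu : Measurable u) (hv : Measurable v) :
    Wcost q (G.map fun w => (u w, v w))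
      = (eLpNorm (fun w => dist (u w) (v w)) (ENNReal.ofReal q) G).toReal := by
  rw [Wcost_eq_toReal_eLpNorm hq,
    eLpNorm_map_measure measurable_dist.aestronglyMeasurable (hu.prodMk hv).aemeasurable]
  rfl

lemma Wcost_map_le_add [BoundedSpace X] {q : ℝ} (hq : 1 ≤ q) (G : Measure Ω) [IsFiniteMeasure G]
    {a b c : Ω → X} (ha : Measurable a) (hb : Measurable b) (hc : Measurable c) :
    Wcost q (G.map fun w => (a w, c w))
      ≤ Wcost q (G.map fun w => (a w, b w)) + Wcost q (G.map fun w => (b w, c w)) := by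
  have hq0 : 0 < q := by linarith
  rw [Wcost_map_eq_toReal_eLpNorm hq0 G ha hc, Wcost_map_eq_toReal_eLpNorm hq0 G ha hb,
    Wcost_map_eq_toReal_eLpNorm hq0 G hb hc]
  exact ENNReal.toReal_le_add (eLpNorm_dist_le_add (ENNReal.one_le_ofReal.2 hq) G ha hb hc)
    (memLp_dist ha hb _ G).eLpNorm_ne_top (memLp_dist hb hc _ G).eLpNorm_ne_top

lemma integral_dist_le_Wcost [BoundedSpace X] {q : ℝ} (hq : 1 ≤ q) (π : Measure (X × X))
    [IsProbabilityMeasure π] :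
    ∫ z, dist z.1 z.2 ∂π ≤ Wcost q π := by
  have hW1 : ∫ z, dist z.1 z.2 ∂π = Wcost 1 π := by simp [Wcost]
  rw [hW1, Wcost_eq_toReal_eLpNorm one_pos, Wcost_eq_toReal_eLpNorm (by linarith)]
  exact ENNReal.toReal_mono (memLp_dist measurable_fst measurable_snd _ π).eLpNorm_ne_top
    (eLpNorm_le_eLpNorm_of_exponent_le (by simpa using hq) measurable_dist.aestronglyMeasurable)

end Wasserstein

lemma BoundedContinuousFunction.dist_le_add_mul_dist {α β : Type*} [PseudoMetricSpace α]
    [SeminormedAddCommGroup β] (f : α →ᵇ β) {ε δ : ℝ} (hδ : 0 < δ)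
    (hf : ∀ a b, dist a b < δ → dist (f a) (f b) ≤ ε) (a b : α) :
    dist (f a) (f b) ≤ ε + 2 * ‖f‖ / δ * dist a b := by
  have hε : 0 ≤ ε := by simpa using hf a a (by simpa using hδ)
  rcases lt_or_ge (dist a b) δ with hab | hab
  · have : 0 ≤ 2 * ‖f‖ / δ * dist a b := by positivity
    linarith [hf a b hab]
  · have : 2 * ‖f‖ ≤ 2 * ‖f‖ / δ * dist a b := by
      rw [div_mul_eq_mul_div, le_div_iff₀ hδ]
      gcongr
    linarith [f.dist_le_two_norm a b]

lemma abs_integral_comp_sub_le {Ω α : Type*} [MeasurableSpace Ω] [PseudoMetricSpace α]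
    [MeasurableSpace α] [OpensMeasurableSpace α] [SecondCountableTopology α] [BoundedSpace α]
    (G : Measure Ω) [IsProbabilityMeasure G] (f : α →ᵇ ℝ) {u v : Ω → α}
    (hu : Measurable u) (hv : Measurable v) {ε δ : ℝ} (hδ : 0 < δ)
    (hf : ∀ a b, dist a b < δ → dist (f a) (f b) ≤ ε) :
    |∫ w, f (u w) ∂G - ∫ w, f (v w) ∂G| ≤ ε + 2 * ‖f‖ / δ * ∫ w, dist (u w) (v w) ∂G := by
  have hfu : Integrable (fun w => f (u w)) G := (f.integrable (G.map u)).comp_measurable hu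
  have hfv : Integrable (fun w => f (v w)) G := (f.integrable (G.map v)).comp_measurable hv
  have hdist : Integrable (fun w => dist (u w) (v w)) G :=
    memLp_one_iff_integrable.1 (memLp_dist hu hv 1 G)
  calc |∫ w, f (u w) ∂G - ∫ w, f (v w) ∂G| = ‖∫ w, (f (u w) - f (v w)) ∂G‖ := by
        rw [integral_sub hfu hfv, Real.norm_eq_abs]
    _ ≤ ∫ w, dist (f (u w)) (f (v w)) ∂G := norm_integral_le_integral_norm _
    _ ≤ ∫ w, (ε + 2 * ‖f‖ / δ * dist (u w) (v w)) ∂G :=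
        integral_mono (hfu.sub hfv).norm ((integrable_const ε).add (hdist.const_mul _))
          fun w => f.dist_le_add_mul_dist hδ hf (u w) (v w)
    _ = ε + 2 * ‖f‖ / δ * ∫ w, dist (u w) (v w) ∂G := by
        rw [integral_add (integrable_const ε) (hdist.const_mul _), integral_const_mul]
        simp

lemma Real.sInf_le_sInf_of_forall_add_mem {S T : Set ℝ} (hST : ∀ ε > 0, ∀ a ∈ S, a + ε ∈ T)
    (hTS : ∀ ε > 0, ∀ a ∈ T, a + ε ∈ S) : sInf T ≤ sInf S := by
  rcases S.eq_empty_or_nonempty with rfl | hS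
  · simp [Set.eq_empty_of_forall_notMem fun a ha => hTS 1 one_pos a ha]
  by_cases hSb : BddBelow S
  · obtain ⟨b, hb⟩ := hSb
    have hTb : BddBelow T := ⟨b - 1, fun t ht => by linarith [hb (hTS 1 one_pos t ht)]⟩
    refine le_of_forall_pos_le_add fun ε hε => ?_
    have : sInf T - ε ≤ sInf S :=
      le_csInf hS fun s hs => by linarith [csInf_le hTb (hST ε hε s hs)]
    linarith
  · have hTb : ¬BddBelow T := fun ⟨b, hb⟩ =>
      hSb ⟨b - 1, fun s hs => by linarith [hb (hST 1 one_pos s hs)]⟩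
    rw [Real.sInf_of_not_bddBelow hSb, Real.sInf_of_not_bddBelow hTb]

/-- Also valid for unbounded `u`, `v`, where both sides take the junk value `0`. -/
theorem Real.limsup_eq_of_tendsto_sub {α : Type*} {l : Filter α} {u v : α → ℝ}
    (h : Tendsto (u - v) l (𝓝 0)) : limsup u l = limsup v l := by
  have shift : ∀ {u v : α → ℝ}, Tendsto (u - v) l (𝓝 0) → ∀ ε > 0,
      ∀ a ∈ {a | ∀ᶠ x in l, v x ≤ a}, a + ε ∈ {a | ∀ᶠ x in l, u x ≤ a} := by
    intro u v h ε hε a ha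
    filter_upwards [ha, h.eventually (eventually_lt_nhds hε)] with x hva hx
    simp only [Pi.sub_apply] at hx
    linarith
  have h' : Tendsto (v - u) l (𝓝 0) := by rw [← neg_sub, ← neg_zero]; exact h.neg
  simp only [limsup_eq]
  exact le_antisymm (Real.sInf_le_sInf_of_forall_add_mem (shift h) (shift h'))
    (Real.sInf_le_sInf_of_forall_add_mem (shift h') (shift h))

namespace planComp

variable {d : ℕ} (P Ph : ProbabilityMeasure (Torus d × Torus d))

lemma eq_map_glue : planComp P Ph
    = (glue (P : Measure (Torus d × Torus d)) (Ph : Measure (Torus d × Torus d))).map Prod.snd :=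
  rfl

instance : IsProbabilityMeasure (planComp P Ph) := by
  rw [eq_map_glue]
  exact Measure.isProbabilityMeasure_map measurable_snd.aemeasurable

lemma map_fst :
    (planComp P Ph).map Prod.fst = (P : Measure (Torus d × Torus d)).map Prod.fst := by
  conv_rhs => rw [← map_glue_left (P : Measure (Torus d × Torus d)) Ph]
  rw [eq_map_glue, Measure.map_map measurable_fst measurable_snd,
    Measure.map_map measurable_fst (measurable_snd.fst.prodMk measurable_fst)]
  rfl

variable {P Ph}

lemma abs_Wcost_sub_le {q : ℝ} (hq : 1 ≤ q)
    (h : (P : Measure (Torus d × Torus d)).map Prod.snd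
      = (Ph : Measure (Torus d × Torus d)).map Prod.fst) :
    |Wcost q (planComp P Ph) - Wcost q (P : Measure (Torus d × Torus d))|
      ≤ Wcost q (Ph : Measure (Torus d × Torus d)) := by
  set G := glue (P : Measure (Torus d × Torus d)) (Ph : Measure (Torus d × Torus d))
  have hQ : G.map (fun w => (w.2.1, w.2.2)) = planComp P Ph := rfl
  have hPh :
      G.map (fun w => (w.2.2, w.1)) = (Ph : Measure (Torus d × Torus d)).map Prod.swap := by
    rw [← map_glue_right _ _ h, Measure.map_map measurable_swap (by fun_prop)]
    rfl
  have hle := Wcost_map_le_add hq G measurable_snd.fst measurable_fst measurable_snd.snd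
  have hge := Wcost_map_le_add hq G measurable_snd.fst measurable_snd.snd measurable_fst
  rw [hQ, map_glue_left, map_glue_right _ _ h] at hle
  rw [hQ, map_glue_left, hPh, Wcost_map_swap] at hge
  rw [abs_sub_le_iff]
  constructor <;> linarith

lemma abs_integral_sub_le {q : ℝ} (hq : 1 ≤ q)
    (h : (P : Measure (Torus d × Torus d)).map Prod.snd
      = (Ph : Measure (Torus d × Torus d)).map Prod.fst)
    (f : Torus d × Torus d →ᵇ ℝ) {ε δ : ℝ} (hδ : 0 < δ)
    (hf : ∀ a b, dist a b < δ → dist (f a) (f b) ≤ ε) :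
    |∫ z, f z ∂(planComp P Ph) - ∫ z, f z ∂(P : Measure (Torus d × Torus d))|
      ≤ ε + 2 * ‖f‖ / δ * Wcost q (Ph : Measure (Torus d × Torus d)) := by
  set G := glue (P : Measure (Torus d × Torus d)) (Ph : Measure (Torus d × Torus d))
  have hQ : ∫ z, f z ∂(planComp P Ph) = ∫ w, f w.2 ∂G := by
    rw [eq_map_glue, integral_map measurable_snd.aemeasurable f.continuous.aestronglyMeasurable]
  have hP : ∫ z, f z ∂(P : Measure (Torus d × Torus d)) = ∫ w, f (w.2.1, w.1) ∂G := by
    rw [← map_glue_left (P : Measure (Torus d × Torus d)) Ph,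
      integral_map (by fun_prop) f.continuous.aestronglyMeasurable]
  have hPh : ∫ w, dist w.2 (w.2.1, w.1) ∂G
      = ∫ z, dist z.1 z.2 ∂(Ph : Measure (Torus d × Torus d)) := by
    rw [← map_glue_right _ _ h, integral_map (by fun_prop) measurable_dist.aestronglyMeasurable]
    congr 1 with w
    rw [Prod.dist_eq, dist_self, max_eq_right dist_nonneg, dist_comm]
  calc _ ≤ ε + 2 * ‖f‖ / δ * ∫ w, dist w.2 (w.2.1, w.1) ∂G := by
        rw [hQ, hP]
        exact abs_integral_comp_sub_le G f measurable_snd (by fun_prop) hδ hf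
    _ ≤ ε + 2 * ‖f‖ / δ * Wcost q (Ph : Measure (Torus d × Torus d)) := by
        rw [hPh]
        gcongr
        exact integral_dist_le_Wcost hq _

end planComp

lemma tendsto_integral_planComp_sub {d : ℕ} {ι : Type*} {l : Filter ι} {q : ℝ} (hq : 1 ≤ q)
    {π πhat : ι → ProbabilityMeasure (Torus d × Torus d)}
    (hmarg : ∀ᶠ i in l, (π i : Measure (Torus d × Torus d)).map Prod.snd
      = (πhat i : Measure (Torus d × Torus d)).map Prod.fst)
    (hW : Tendsto (fun i => Wcost q (πhat i : Measure (Torus d × Torus d))) l (𝓝 0))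
    (f : Torus d × Torus d →ᵇ ℝ) :
    Tendsto (fun i => ∫ z, f z ∂(planComp (π i) (πhat i))
      - ∫ z, f z ∂(π i : Measure (Torus d × Torus d))) l (𝓝 0) := by
  rw [Metric.tendsto_nhds]
  intro ε hε
  obtain ⟨δ, hδ, hfδ⟩ := Metric.uniformContinuous_iff.1
    (CompactSpace.uniformContinuous_of_continuous f.continuous) (ε / 2) (half_pos hε)
  have hKW : Tendsto (fun i => 2 * ‖f‖ / δ * Wcost q (πhat i : Measure (Torus d × Torus d)))
      l (𝓝 0) := by
    simpa using hW.const_mul (2 * ‖f‖ / δ)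
  filter_upwards [hmarg, hKW.eventually (eventually_lt_nhds (half_pos hε))] with i hi hWi
  rw [Real.dist_eq, sub_zero]
  calc _ ≤ ε / 2 + 2 * ‖f‖ / δ * Wcost q (πhat i : Measure (Torus d × Torus d)) :=
        planComp.abs_integral_sub_le hq hi f hδ fun a b hab => (hfδ hab).le
    _ < ε := by linarith

theorem stmt1_general {d : ℕ} (q T : ℝ) (hq : 1 ≤ q) (hT : 0 < T)
    (μ : Measure (Torus d))
    (π πhat : ℝ → ProbabilityMeasure (Torus d × Torus d))
    (hπ : IsAdmissibleVariation q T μ (fun t => (π t : Measure (Torus d × Torus d))))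
    (hmarg : ∀ t ∈ Set.Icc (0:ℝ) T,
      ((π t : Measure (Torus d × Torus d))).map Prod.snd
        = ((πhat t : Measure (Torus d × Torus d))).map Prod.fst)
    (hsmall : Tendsto (fun t => Wcost q (πhat t : Measure (Torus d × Torus d)) / t)
      (𝓝[>] (0:ℝ)) (𝓝 0)) :
    IsAdmissibleVariation q T μ (fun t => planComp (π t) (πhat t)) := by
  obtain ⟨-, hfst, hnarrow, C, hC, hlim⟩ := hπ
  have hIoc : ∀ᶠ t in 𝓝[>] (0:ℝ), t ∈ Set.Ioc 0 T := Ioc_mem_nhdsGT hT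
  have hmarg' := hIoc.mono fun t ht => hmarg t (Set.Ioc_subset_Icc_self ht)
  have hW :
      Tendsto (fun t => Wcost q (πhat t : Measure (Torus d × Torus d))) (𝓝[>] 0) (𝓝 0) := by
    have := hsmall.mul (tendsto_nhdsWithin_of_tendsto_nhds tendsto_id)
    rw [zero_mul] at this
    refine this.congr' ?_
    filter_upwards [self_mem_nhdsWithin] with t (ht : 0 < t)
    exact div_mul_cancel₀ _ ht.ne'
  have hsub : Tendsto (fun t => Wcost q (planComp (π t) (πhat t)) / t
      - Wcost q (π t : Measure (Torus d × Torus d)) / t) (𝓝[>] 0) (𝓝 0) := by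
    refine squeeze_zero_norm' ?_ hsmall
    filter_upwards [hmarg', self_mem_nhdsWithin] with t ht (htpos : 0 < t)
    rw [← sub_div, norm_div, Real.norm_of_nonneg htpos.le, Real.norm_eq_abs]
    exact div_le_div_of_nonneg_right (planComp.abs_Wcost_sub_le hq ht) htpos.le
  refine ⟨fun t _ => inferInstance, fun t ht => ?_, fun f => ?_, C, hC, ?_⟩
  · rw [planComp.map_fst]
    exact hfst t ht
  · simpa using (tendsto_integral_planComp_sub hq hmarg' hW f).add (hnarrow f)
  · rwa [Real.limsup_eq_of_tendsto_sub hsub]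

theorem stmt1 {d : ℕ} (q T : ℝ) (hq : 1 ≤ q) (hT : 0 < T)
    (μ : Measure (Torus d)) [IsProbabilityMeasure μ]
    (π πhat : ℝ → ProbabilityMeasure (Torus d × Torus d))
    (hπ : IsAdmissibleVariation q T μ (fun t => (π t : Measure (Torus d × Torus d))))
    (hmarg : ∀ t ∈ Set.Icc (0:ℝ) T,
      ((π t : Measure (Torus d × Torus d))).map Prod.snd
        = ((πhat t : Measure (Torus d × Torus d))).map Prod.fst)
    (hsmall : Tendsto (fun t => Wcost q (πhat t : Measure (Torus d × Torus d)) / t)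
      (𝓝[>] (0:ℝ)) (𝓝 0)) :
    IsAdmissibleVariation q T μ (fun t => planComp (π t) (πhat t)) :=
  stmt1_general q T hq hT μ π πhat hπ hmarg hsmall
end
end

section
/- Let 𝕏 be a separable metric space, 𝕐 a metric space, h : 𝕏 → 𝕐 a continuous map, and 𝔽 : 𝕏 ⇉ 𝕐 a weakly measurable set-valued map with nonempty compact values. Then there exists a Borel map Pr_𝔽 : 𝕏 → 𝕐 such that Pr_𝔽(x) ∈ 𝔽(x) for all x ∈ 𝕏 and d_𝕐(h(x), Pr_𝔽(x)) = dist(h(x), 𝔽(x)) for all x ∈ 𝕏, where dist(y, A) := inf_{a∈A} d_𝕐(y,a). -/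
/-!
The nearest-point map `A x := F x ∩ closedBall (h x) (infDist (h x) (F x))` has nonempty
compact values, and since `range h` is separable, weak measurability of `F` makes
`{x | A x ∩ C ≠ ∅}` measurable for every closed `C`. A measurable selection of `A` is then
built as in the Kuratowski–Ryll-Nardzewski theorem: shrink the values step by step to pieces
of diameter at most `1 / (n + 1)` and select the point of the nested intersection.

As `Y` need not be separable, a piece is cut out by a locally finite closed cover of `Y` by
small sets (metric spaces are paracompact). Only finitely many members of the cover meet a
given compact value, and one keeps the member of least real label; injective labels exist
because a countably separated `X` has at most continuum many points.
-/

open MeasureTheory Metric Set Function TopologicalSpace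

theorem exists_injOn_real_iUnion {X Y : Type*} [MeasurableSpace X]
    [MeasurableSpace.CountablySeparated X] (H : X → Set Y) (hH : ∀ x, (H x).Countable) :
    ∃ e : Y → ℝ, InjOn e (⋃ x, H x) := by
  classical
  choose c hc using fun x => Set.countable_iff_exists_injective.1 (hH x)
  obtain ⟨f, -, hf⟩ := MeasurableSpace.measurable_injection_nat_bool_of_countablySeparated X
  obtain ⟨r, hr⟩ := exists_measurableEmbedding_real ((ℕ → Bool) × ℕ)
  let j : (Σ x, H x) → ℝ := fun p => r (f p.1, c p.1 p.2)
  have hj : Injective j := hr.injective.comp <| (Equiv.sigmaEquivProd _ ℕ).injective.comp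
    (hf.sigma_map hc)
  have hs := sigmaToiUnion_surjective H
  refine ⟨fun y => if hy : y ∈ ⋃ x, H x then j (surjInv hs ⟨y, hy⟩) else 0, ?_⟩
  intro a ha b hb hab
  simp only [dif_pos ha, dif_pos hb] at hab
  simpa using injective_surjInv hs (hj hab)

theorem Set.Finite.exists_le_of_forall_lt {I : Type*} {J : Set I} (hJ : J.Finite) (e : I → ℝ)
    {a : ℝ} (h : ∀ t, a < t → ∃ i ∈ J, e i < t) : ∃ i ∈ J, e i ≤ a := by
  by_contra! hlt
  obtain ⟨i, hi, -⟩ := h (a + 1) (lt_add_one a)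
  obtain ⟨i₀, hi₀, hmin⟩ := J.exists_min_image e hJ ⟨i, hi⟩
  obtain ⟨i, hi, hlt'⟩ := h (e i₀) (hlt i₀ hi₀)
  exact (hmin i hi).not_gt hlt'

structure IsMeasurableCompactValued {X Y : Type*} [MeasurableSpace X] [TopologicalSpace Y]
    (G : X → Set Y) : Prop where
  nonempty : ∀ x, (G x).Nonempty
  isCompact : ∀ x, IsCompact (G x)
  measurableSet_hit : ∀ C, IsClosed C → MeasurableSet {x | (G x ∩ C).Nonempty}

section LocallyFiniteCover

variable {X Y I : Type*} [MeasurableSpace X] [TopologicalSpace Y] {G : X → Set Y}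
  {K : I → Set Y}

theorem measurableSet_exists_hit_of_locallyFinite
    (hG : ∀ C, IsClosed C → MeasurableSet {x | (G x ∩ C).Nonempty})
    (hK : LocallyFinite K) (hKc : ∀ i, IsClosed (K i)) (S : Set I) :
    MeasurableSet {x | ∃ i ∈ S, (G x ∩ K i).Nonempty} := by
  have hS : IsClosed (⋃ i : S, K i) :=
    (hK.comp_injective Subtype.val_injective).isClosed_iUnion fun i => hKc i
  convert hG _ hS using 1
  ext x
  simp only [mem_ofPred_eq, inter_iUnion, nonempty_iUnion, Subtype.exists, exists_prop]

theorem measurable_comp_minimizer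
    (hG : ∀ C, IsClosed C → MeasurableSet {x | (G x ∩ C).Nonempty})
    (hK : LocallyFinite K) (hKc : ∀ i, IsClosed (K i)) (e : I → ℝ) {σ : X → I}
    (hσ : ∀ x, (G x ∩ K (σ x)).Nonempty)
    (hmin : ∀ x i, (G x ∩ K i).Nonempty → e (σ x) ≤ e i) :
    Measurable fun x => e (σ x) := by
  refine measurable_of_Iio fun t => ?_
  convert measurableSet_exists_hit_of_locallyFinite hG hK hKc {i | e i < t} using 1
  ext x
  exact ⟨fun hx => ⟨σ x, hx, hσ x⟩, fun ⟨i, hi, hx⟩ => (hmin x i hx).trans_lt hi⟩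

/-- Only finitely many indices hit `G x`, and `σ x` is the one of least label; so `σ x` meets
`C` iff for every rational `q` above its label some index of label `< q` hits `G x ∩ C`. -/
theorem measurableSet_hit_inter_minimizer (hcpt : ∀ x, IsCompact (G x))
    (hG : ∀ C, IsClosed C → MeasurableSet {x | (G x ∩ C).Nonempty})
    (hK : LocallyFinite K) (hKc : ∀ i, IsClosed (K i)) {e : I → ℝ}
    (he : InjOn e (⋃ x, {i | (G x ∩ K i).Nonempty})) {σ : X → I}
    (hσ : ∀ x, (G x ∩ K (σ x)).Nonempty)
    (hmin : ∀ x i, (G x ∩ K i).Nonempty → e (σ x) ≤ e i) {C : Set Y} (hC : IsClosed C) :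
    MeasurableSet {x | (G x ∩ K (σ x) ∩ C).Nonempty} := by
  have key : {x | (G x ∩ K (σ x) ∩ C).Nonempty} =
      ⋂ q : ℚ, {x | e (σ x) < q}ᶜ ∪
        {x | ∃ i ∈ {i | e i < q}, (G x ∩ (K i ∩ C)).Nonempty} := by
    ext x
    simp only [mem_iInter, mem_union, mem_compl_iff, mem_ofPred_eq, or_iff_not_imp_left, not_not]
    refine ⟨fun hx q hq => ⟨σ x, hq, by rwa [← inter_assoc]⟩, fun hx => ?_⟩
    have hfin : {i | (G x ∩ (K i ∩ C)).Nonempty}.Finite :=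
      (hK.finite_nonempty_inter_compact (hcpt x)).subset
        fun i ⟨y, hyG, hyK, _⟩ => ⟨y, hyK, hyG⟩
    obtain ⟨i, hiC, hle⟩ := hfin.exists_le_of_forall_lt e (a := e (σ x)) fun t ht => by
      obtain ⟨q, hq, hqt⟩ := exists_rat_btwn ht
      obtain ⟨i, hi, hiC⟩ := hx q hq
      exact ⟨i, hiC, hi.trans hqt⟩
    have hi : (G x ∩ K i).Nonempty := hiC.mono (inter_subset_inter_right _ inter_subset_left)
    have hiσ : i = σ x := he (mem_iUnion_of_mem x hi) (mem_iUnion_of_mem x (hσ x))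
      (hle.antisymm (hmin x i hi))
    rw [← hiσ, inter_assoc]
    exact hiC
  have hσmeas := measurable_comp_minimizer hG hK hKc e hσ hmin
  have hhit (q : ℚ) := measurableSet_exists_hit_of_locallyFinite hG
    (hK.subset fun i => inter_subset_left) (fun i => (hKc i).inter hC) {i | e i < q}
  rw [key]
  exact .iInter fun q => (hσmeas measurableSet_Iio).compl.union (hhit q)

end LocallyFiniteCover

section Selection

variable {X Y : Type*} [MeasurableSpace X] [MetricSpace Y]

theorem IsMeasurableCompactValued.exists_subset_diam_le [MeasurableSpace.CountablySeparated X]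
    {G : X → Set Y} (hG : IsMeasurableCompactValued G) {δ : ℝ} (hδ : 0 < δ) :
    ∃ G' : X → Set Y, IsMeasurableCompactValued G' ∧ (∀ x, G' x ⊆ G x) ∧
      ∀ x, diam (G' x) ≤ δ := by
  obtain ⟨W, -, hWcov, hWlf, hWball⟩ := precise_refinement (fun y : Y => ball y (δ / 2))
    (fun _ => isOpen_ball) (iUnion_eq_univ_iff.2 fun y => ⟨y, mem_ball_self (by positivity)⟩)
  set K := fun i => closure (W i)
  have hK : LocallyFinite K := hWlf.closure
  have hfin (x : X) : {i | (G x ∩ K i).Nonempty}.Finite := by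
    simpa only [inter_comm] using hK.finite_nonempty_inter_compact (hG.isCompact x)
  have hne (x : X) : {i | (G x ∩ K i).Nonempty}.Nonempty := by
    obtain ⟨y, hy⟩ := hG.nonempty x
    obtain ⟨i, hi⟩ := mem_iUnion.1 (hWcov.symm ▸ mem_univ y)
    exact ⟨i, y, hy, subset_closure hi⟩
  obtain ⟨e, he⟩ := exists_injOn_real_iUnion _ fun x => (hfin x).countable
  choose σ hσ hmin using fun x => exists_min_image _ e (hfin x) (hne x)
  have hG' : IsMeasurableCompactValued fun x => G x ∩ K (σ x) :=
    ⟨hσ, fun x => (hG.isCompact x).inter_right isClosed_closure,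
      fun C hC => measurableSet_hit_inter_minimizer hG.isCompact hG.measurableSet_hit hK
        (fun _ => isClosed_closure) he hσ hmin hC⟩
  refine ⟨_, hG', fun x => inter_subset_left, fun x => ?_⟩
  calc diam (G x ∩ K (σ x)) ≤ diam (closedBall (σ x) (δ / 2)) :=
        diam_mono (inter_subset_right.trans
          ((closure_mono (hWball _)).trans closure_ball_subset_closedBall)) isBounded_closedBall
    _ ≤ 2 * (δ / 2) := diam_closedBall (by positivity)
    _ = δ := by ring

variable [MeasurableSpace Y] [BorelSpace Y]

theorem exists_measurable_forall_mem_of_diam_lt {S : ℕ → X → Set Y}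
    (hS : ∀ n, IsMeasurableCompactValued (S n)) (hanti : ∀ n x, S (n + 1) x ⊆ S n x)
    (hdiam : ∀ ε > 0, ∃ n, ∀ x, diam (S n x) < ε) :
    ∃ g : X → Y, Measurable g ∧ ∀ n x, g x ∈ S n x := by
  have hne (x : X) : (⋂ n, S n x).Nonempty :=
    IsCompact.nonempty_iInter_of_sequence_nonempty_isCompact_isClosed (fun n => S n x)
      (fun n => hanti n x) (fun n => (hS n).nonempty x) ((hS 0).isCompact x)
      fun n => ((hS n).isCompact x).isClosed
  choose g hg using hne
  have hgS (n : ℕ) (x : X) : g x ∈ S n x := mem_iInter.1 (hg x) n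
  refine ⟨g, measurable_of_isClosed fun C hC => ?_, hgS⟩
  have hpre : g ⁻¹' C = ⋂ n, {x | (S n x ∩ C).Nonempty} := by
    ext x
    simp only [mem_preimage, mem_iInter, mem_ofPred_eq]
    refine ⟨fun hx n => ⟨g x, hgS n x, hx⟩, fun hx => hC.closure_subset ?_⟩
    refine Metric.mem_closure_iff.2 fun ε hε => ?_
    obtain ⟨n, hn⟩ := hdiam ε hε
    obtain ⟨y, hyS, hyC⟩ := hx n
    exact ⟨y, hyC, (dist_le_diam_of_mem ((hS n).isCompact x).isBounded (hgS n x) hyS).trans_lt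
      (hn x)⟩
  rw [hpre]
  exact .iInter fun n => (hS n).measurableSet_hit C hC

theorem IsMeasurableCompactValued.exists_measurable_selection
    [MeasurableSpace.CountablySeparated X] {A : X → Set Y} (hA : IsMeasurableCompactValued A) :
    ∃ g : X → Y, Measurable g ∧ ∀ x, g x ∈ A x := by
  have hstep (G : X → Set Y) (hG : IsMeasurableCompactValued G) (n : ℕ) :=
    hG.exists_subset_diam_le (δ := 1 / (n + 1)) Nat.one_div_pos_of_nat
  choose! R hR hRsub hRdiam using hstep
  let S : ℕ → X → Set Y := fun n => Nat.rec A (fun n G => R G n) n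
  have hS (n : ℕ) : IsMeasurableCompactValued (S n) := by
    induction n with
    | zero => exact hA
    | succ n ih => exact hR _ ih n
  obtain ⟨g, hg, hgS⟩ := exists_measurable_forall_mem_of_diam_lt hS
    (fun n => hRsub _ (hS n) n) fun ε hε => by
      obtain ⟨n, hn⟩ := exists_nat_one_div_lt hε
      exact ⟨n + 1, fun x => (hRdiam _ (hS n) n x).trans_lt hn⟩
  exact ⟨g, hg, hgS 0⟩

end Selection

theorem IsCompact.nonempty_inter_iInter_closure {Y : Type*} [TopologicalSpace Y] [T2Space Y]
    {S : Set Y} (hS : IsCompact S) {V : ℕ → Set Y} (hV : Antitone V)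
    (h : ∀ n, (S ∩ V n).Nonempty) : (S ∩ ⋂ n, closure (V n)).Nonempty := by
  rw [inter_iInter]
  exact IsCompact.nonempty_iInter_of_sequence_nonempty_isCompact_isClosed _
    (fun n => inter_subset_inter_right _ (closure_mono (hV n.le_succ)))
    (fun n => (h n).mono (inter_subset_inter_right _ subset_closure))
    (hS.inter_right isClosed_closure) fun n => (hS.inter_right isClosed_closure).isClosed

theorem IsCompact.nonempty_inter_closedBall_inter {Y : Type*} [MetricSpace Y] {S C : Set Y}
    (hS : IsCompact S) (hC : IsClosed C) (z : Y) (r : ℝ)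
    (h : ∀ n : ℕ, (S ∩ (thickening (1 / (n + 1)) C ∩ ball z (r + 1 / (n + 1)))).Nonempty) :
    (S ∩ closedBall z r ∩ C).Nonempty := by
  have hV : Antitone fun n : ℕ => thickening (1 / (n + 1)) C ∩ ball z (r + 1 / (n + 1)) :=
    fun m n hmn => inter_subset_inter (thickening_mono (Nat.one_div_le_one_div hmn) C)
      (ball_subset_ball (by gcongr))
  obtain ⟨y, hyS, hy⟩ := hS.nonempty_inter_iInter_closure hV h
  have hy' (n : ℕ) : y ∈ cthickening (1 / (n + 1)) C ∧ y ∈ closedBall z (r + 1 / (n + 1)) :=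
    (closure_inter_subset_inter_closure _ _).trans
      (inter_subset_inter (closure_thickening_subset_cthickening _ _)
        closure_ball_subset_closedBall) (mem_iInter.1 hy n)
  refine ⟨y, ⟨hyS, mem_closedBall.2 (le_of_forall_pos_lt_add fun ε hε => ?_)⟩, ?_⟩
  · obtain ⟨n, hn⟩ := exists_nat_one_div_lt hε
    exact (mem_closedBall.1 (hy' n).2).trans_lt (by linarith)
  · rw [← hC.closure_eq, closure_eq_iInter_cthickening]
    refine mem_iInter₂.2 fun ε hε => ?_
    obtain ⟨n, hn⟩ := exists_nat_one_div_lt hε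
    exact cthickening_mono hn.le C (hy' n).1

section Projection

variable {X Y : Type*} [MeasurableSpace X] [MetricSpace Y] [MeasurableSpace Y]
  [OpensMeasurableSpace Y] {F : X → Set Y} {h : X → Y}

/-- The ball around the moving centre `h x` is replaced by balls around the points of a
countable dense subset of `range h`. -/
theorem measurableSet_hit_inter_ball
    (hF : ∀ U, IsOpen U → MeasurableSet {x | (F x ∩ U).Nonempty}) (hh : Measurable h)
    (hsep : IsSeparable (range h)) {V : Set Y} (hV : IsOpen V) (r : ℝ) :
    MeasurableSet {x | (F x ∩ (V ∩ ball (h x) r)).Nonempty} := by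
  obtain ⟨t, -, htc, hdense⟩ := hsep.exists_countable_dense_subset
  have key : {x | (F x ∩ (V ∩ ball (h x) r)).Nonempty} =
      ⋃ z ∈ t, ⋃ s : ℚ,
        h ⁻¹' ball z (r - s) ∩ {x | (F x ∩ (V ∩ ball z s)).Nonempty} := by
    ext x
    simp only [mem_ofPred_eq, mem_iUnion, mem_inter_iff, mem_preimage, mem_ball, exists_prop]
    constructor
    · rintro ⟨y, hyF, hyV, hy⟩
      rw [mem_ball] at hy
      set ε := (r - dist y (h x)) / 3
      have hε3 : 3 * ε = r - dist y (h x) := by simp only [ε]; ring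
      have hε : 0 < ε := by linarith
      obtain ⟨z, hzt, hz⟩ := Metric.mem_closure_iff.1 (hdense (mem_range_self x)) ε hε
      obtain ⟨s, hs, hsε⟩ := exists_rat_btwn (lt_add_of_pos_right (dist y z) hε)
      refine ⟨z, hzt, s, ?_, y, hyF, hyV, hs⟩
      linarith [dist_triangle y (h x) z]
    · rintro ⟨z, -, s, hz, y, hyF, hyV, hy⟩
      rw [mem_ball] at hy
      exact ⟨y, hyF, hyV,
        mem_ball.2 (by linarith [dist_triangle y z (h x), dist_comm z (h x)])⟩
  rw [key]
  exact .biUnion htc fun z _ => .iUnion fun s =>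
    (hh measurableSet_ball).inter (hF _ (hV.inter isOpen_ball))

theorem measurableSet_hit_inter_ball_of_measurable
    (hF : ∀ U, IsOpen U → MeasurableSet {x | (F x ∩ U).Nonempty}) (hh : Measurable h)
    (hsep : IsSeparable (range h)) {V : Set Y} (hV : IsOpen V) {r : X → ℝ} (hr : Measurable r) :
    MeasurableSet {x | (F x ∩ (V ∩ ball (h x) (r x))).Nonempty} := by
  have key : {x | (F x ∩ (V ∩ ball (h x) (r x))).Nonempty} =
      ⋃ q : ℚ, {x | (q : ℝ) < r x} ∩ {x | (F x ∩ (V ∩ ball (h x) q)).Nonempty} := by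
    ext x
    simp only [mem_ofPred_eq, mem_iUnion, mem_inter_iff]
    constructor
    · rintro ⟨y, hyF, hyV, hy⟩
      obtain ⟨q, hyq, hqr⟩ := exists_rat_btwn (mem_ball.1 hy)
      exact ⟨q, hqr, y, hyF, hyV, hyq⟩
    · rintro ⟨q, hqr, y, hyF, hyV, hyq⟩
      exact ⟨y, hyF, hyV, hyq.trans hqr⟩
  rw [key]
  exact .iUnion fun q => (measurableSet_lt measurable_const hr).inter
    (measurableSet_hit_inter_ball hF hh hsep hV q)

theorem measurable_infDist_of_hit
    (hF : ∀ U, IsOpen U → MeasurableSet {x | (F x ∩ U).Nonempty}) (hh : Measurable h)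
    (hsep : IsSeparable (range h)) (hne : ∀ x, (F x).Nonempty) :
    Measurable fun x => infDist (h x) (F x) := by
  refine measurable_of_Iio fun t => ?_
  convert measurableSet_hit_inter_ball hF hh hsep isOpen_univ t using 1
  ext x
  simp only [mem_preimage, mem_Iio, infDist_lt_iff (hne x), mem_ofPred_eq, univ_inter]
  exact ⟨fun ⟨y, hyF, hy⟩ => ⟨y, hyF, by rwa [mem_ball, dist_comm]⟩,
    fun ⟨y, hyF, hy⟩ => ⟨y, hyF, by rwa [mem_ball, dist_comm] at hy⟩⟩

theorem isMeasurableCompactValued_inter_closedBall_infDist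
    (hF : ∀ U, IsOpen U → MeasurableSet {x | (F x ∩ U).Nonempty}) (hh : Measurable h)
    (hsep : IsSeparable (range h)) (hne : ∀ x, (F x).Nonempty) (hcpt : ∀ x, IsCompact (F x)) :
    IsMeasurableCompactValued fun x => F x ∩ closedBall (h x) (infDist (h x) (F x)) where
  nonempty x := by
    obtain ⟨y, hyF, hy⟩ := (hcpt x).exists_infDist_eq_dist (hne x) (h x)
    exact ⟨y, hyF, by rw [mem_closedBall, dist_comm, hy]⟩
  isCompact x := (hcpt x).inter_right isClosed_closedBall
  measurableSet_hit C hC := by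
    have key : {x | (F x ∩ closedBall (h x) (infDist (h x) (F x)) ∩ C).Nonempty} =
        ⋂ n : ℕ, {x | (F x ∩ (thickening (1 / (n + 1)) C ∩
          ball (h x) (infDist (h x) (F x) + 1 / (n + 1)))).Nonempty} := by
      ext x
      simp only [mem_ofPred_eq, mem_iInter]
      refine ⟨fun ⟨y, ⟨hyF, hyB⟩, hyC⟩ n => ?_,
        (hcpt x).nonempty_inter_closedBall_inter hC (h x) _⟩
      exact ⟨y, hyF, self_subset_thickening Nat.one_div_pos_of_nat C hyC,
        (mem_closedBall.1 hyB).trans_lt (lt_add_of_pos_right _ Nat.one_div_pos_of_nat)⟩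
    rw [key]
    exact .iInter fun n => measurableSet_hit_inter_ball_of_measurable hF hh hsep
      isOpen_thickening ((measurable_infDist_of_hit hF hh hsep hne).add_const _)

end Projection

/-- Projection lemma: a Borel selection of a weakly measurable compact-valued
set-valued map realizing the distance to a continuous map. -/
theorem stmt19 {X Y : Type*}
    [MetricSpace X] [TopologicalSpace.SeparableSpace X] [MeasurableSpace X] [BorelSpace X]
    [MetricSpace Y] [MeasurableSpace Y] [BorelSpace Y]
    (h : X → Y) (hc : Continuous h)
    (F : X → Set Y)
    (hFne : ∀ x, (F x).Nonempty) (hFcpt : ∀ x, IsCompact (F x))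
    -- weak measurability of the set-valued map `F`
    (hFmeas : ∀ U : Set Y, IsOpen U → MeasurableSet {x | (F x ∩ U).Nonempty}) :
    ∃ g : X → Y, Measurable g ∧ (∀ x, g x ∈ F x) ∧
      ∀ x, dist (h x) (g x) = Metric.infDist (h x) (F x) := by
  have hA := isMeasurableCompactValued_inter_closedBall_infDist hFmeas hc.measurable
    (isSeparable_range hc) hFne hFcpt
  obtain ⟨g, hg, hgA⟩ := hA.exists_measurable_selection
  exact ⟨g, hg, fun x => (hgA x).1,
    fun x => (mem_closedBall'.1 (hgA x).2).antisymm (infDist_le_dist_of_mem (hgA x).1)⟩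
end
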